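/- Let λ > 0 and C, D > 0 with √C + √D = √λ, set f(r) = √(1 - (√C+√D)/√(λ+r²)) for r ≥ 0, and N = {(v,w) ∈ ℝ³ × ℝ³ : ⟨v,w⟩ = 0, (1-|v|²)√(λ+|w|²) = √C+√D}. Then the map from the cone (ℝ_{≥0} × SO(3))/({0} × SO(3)) to N sending [(r,(g₁,g₂,g₃))] ↦ (f(r)g₁, r g₂), where g₁,g₂,g₃ are the columns of an orthogonal matrix, is a well-defined homeomorphism. In particular N is homeomorphic to the cone over SO(3) with apex, and (0,0) ∈ N is the apex. -/

import Mathlib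

open scoped RealInnerProductSpace
open Real Matrix

/-- `N = {(v,w) ∈ ℝ³ × ℝ³ : ⟨v,w⟩ = 0, (1-|v|²)√(λ+|w|²) = √C + √D}`. -/
def NSet (lam C D : ℝ) : Set (EuclideanSpace ℝ (Fin 3) × EuclideanSpace ℝ (Fin 3)) :=
  {p | ⟪p.1, p.2⟫ = 0 ∧ (1 - ‖p.1‖ ^ 2) * Real.sqrt (lam + ‖p.2‖ ^ 2) =
    Real.sqrt C + Real.sqrt D}

/-- SO(3), viewed as the set of positively oriented orthonormal frames of ℝ³
(the columns of the matrix). -/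
def SO3 : Type := {g : Matrix (Fin 3) (Fin 3) ℝ // g * gᵀ = 1 ∧ g.det = 1}

instance : TopologicalSpace SO3 :=
  inferInstanceAs (TopologicalSpace {g : Matrix (Fin 3) (Fin 3) ℝ // g * gᵀ = 1 ∧ g.det = 1})

/-- The setoid on `ℝ≥0 × SO(3)` collapsing `{0} × SO(3)` to a point. -/
def coneSetoid : Setoid (NNReal × SO3) where
  r a b := a = b ∨ (a.1 = 0 ∧ b.1 = 0)
  iseqv := by
    refine ⟨fun a => Or.inl rfl, ?_, ?_⟩
    · rintro a b (rfl | ⟨h1, h2⟩)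
      · exact Or.inl rfl
      · exact Or.inr ⟨h2, h1⟩
    · rintro a b c (rfl | ⟨h1, h2⟩) (rfl | ⟨h3, h4⟩)
      · exact Or.inl rfl
      · exact Or.inr ⟨h3, h4⟩
      · exact Or.inr ⟨h1, h2⟩
      · exact Or.inr ⟨h1, h4⟩

/-- The cone over SO(3), `(ℝ≥0 × SO(3)) / ({0} × SO(3))`, with the quotient topology. -/
def ConeSO3 : Type := Quotient coneSetoid

instance : TopologicalSpace ConeSO3 := inferInstanceAs (TopologicalSpace (Quotient coneSetoid))

/-- The `i`-th column of `g ∈ SO(3)` as a vector of ℝ³. -/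
def col (g : SO3) (i : Fin 3) : EuclideanSpace ℝ (Fin 3) := WithLp.toLp 2 (fun j => g.val j i)

/- ### Auxiliary material -/

lemma inner_eq_dot (x y : EuclideanSpace ℝ (Fin 3)) :
    ⟪x, y⟫ = (x : Fin 3 → ℝ) ⬝ᵥ (y : Fin 3 → ℝ) := by
  simp [PiLp.inner_apply, dotProduct, mul_comm]

lemma SO3.transpose_mul (g : SO3) : g.valᵀ * g.val = 1 :=
  mul_eq_one_comm.mp g.2.1

lemma inner_col (g : SO3) (i j : Fin 3) :
    ⟪_root_.col g i, _root_.col g j⟫ = if i = j then 1 else 0 := by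
  have h := congrFun (congrFun g.transpose_mul i) j
  rw [Matrix.mul_apply] at h
  rw [inner_eq_dot]
  simpa [_root_.col, dotProduct, Matrix.one_apply, Matrix.transpose_apply] using h

lemma norm_col (g : SO3) (i : Fin 3) : ‖_root_.col g i‖ = 1 := by
  have h := inner_col g i i
  rw [if_pos rfl] at h
  rw [real_inner_self_eq_norm_sq] at h
  nlinarith [norm_nonneg (_root_.col g i)]

lemma col_two (g : SO3) :
    (_root_.col g 2 : Fin 3 → ℝ) = crossProduct (_root_.col g 0) (_root_.col g 1) := by
  have hadj : g.val.adjugate = g.valᵀ := by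
    have h1 : g.val * g.val.adjugate = 1 := by
      rw [Matrix.mul_adjugate, g.2.2, one_smul]
    calc g.val.adjugate = (g.valᵀ * g.val) * g.val.adjugate := by rw [g.transpose_mul, one_mul]
    _ = g.valᵀ * (g.val * g.val.adjugate) := by rw [Matrix.mul_assoc]
    _ = g.valᵀ := by rw [h1, mul_one]
  have hadj3 := adjugate_fin_three g.val
  rw [hadj] at hadj3
  funext k
  have hk := congrFun (congrFun hadj3.symm 2) k
  fin_cases k <;>
    · simp [_root_.col, cross_apply, Matrix.transpose_apply] at hk ⊢
      linear_combination -hk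

def frameMat (a b : Fin 3 → ℝ) : Matrix (Fin 3) (Fin 3) ℝ :=
  (![a, b, crossProduct a b] : Matrix (Fin 3) (Fin 3) ℝ)ᵀ

lemma frameMat_prop (a b : Fin 3 → ℝ) (ha : a ⬝ᵥ a = 1) (hb : b ⬝ᵥ b = 1)
    (hab : a ⬝ᵥ b = 0) :
    frameMat a b * (frameMat a b)ᵀ = 1 ∧ (frameMat a b).det = 1 := by
  have hba : b ⬝ᵥ a = 0 := by rwa [dotProduct_comm]
  have hcc : (crossProduct a b) ⬝ᵥ (crossProduct a b) = 1 := by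
    rw [cross_dot_cross, ha, hb, hba, hab]; ring
  set M : Matrix (Fin 3) (Fin 3) ℝ := ![a, b, crossProduct a b] with hM
  have key : ∀ i j, (M * Mᵀ) i j = M i ⬝ᵥ M j := fun i j => by
    simp [Matrix.mul_apply, dotProduct, Matrix.transpose_apply]
  have ha' := ha; have hb' := hb; have hab' := hab; have hba' := hba; have hcc' := hcc
  have hac' : a ⬝ᵥ (crossProduct a b) = 0 := dot_self_cross a b
  have hbc' : b ⬝ᵥ (crossProduct a b) = 0 := dot_cross_self a b
  rw [Matrix.vec3_dotProduct] at ha' hb' hab' hba' hcc' hac' hbc'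
  have hMM : M * Mᵀ = 1 := by
    ext i j
    rw [key, Matrix.one_apply]
    fin_cases i <;> fin_cases j <;> simp [hM] <;>
      linarith [ha', hb', hab', hba', hcc', hac', hbc',
        (dotProduct_comm (crossProduct a b) a).trans (dot_self_cross a b),
        (dotProduct_comm (crossProduct a b) b).trans (dot_cross_self a b)]
  have hdet : M.det = 1 := by
    have h1 : M.det = (crossProduct a b) ⬝ᵥ (crossProduct a b) := by
      rw [hM, ← triple_product_eq_det, triple_product_permutation,
        triple_product_permutation]
    rw [h1, hcc]
  constructor
  · show Mᵀ * Mᵀᵀ = 1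
    rw [Matrix.transpose_transpose]
    exact mul_eq_one_comm.mp hMM
  · show Mᵀ.det = 1
    rw [Matrix.det_transpose, hdet]

def frameSO3 (a b : EuclideanSpace ℝ (Fin 3)) (ha : (a : Fin 3 → ℝ) ⬝ᵥ a = 1)
    (hb : (b : Fin 3 → ℝ) ⬝ᵥ b = 1) (hab : (a : Fin 3 → ℝ) ⬝ᵥ b = 0) : SO3 :=
  ⟨frameMat a b, frameMat_prop a b ha hb hab⟩

lemma frameSO3_col0 (a b : EuclideanSpace ℝ (Fin 3)) (ha hb hab) :
    _root_.col (frameSO3 a b ha hb hab) 0 = a := rfl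

lemma frameSO3_col1 (a b : EuclideanSpace ℝ (Fin 3)) (ha hb hab) :
    _root_.col (frameSO3 a b ha hb hab) 1 = b := rfl

def SO3.one : SO3 := ⟨1, by simp, by simp⟩

instance : CompactSpace SO3 := by
  have hsub : {g : Matrix (Fin 3) (Fin 3) ℝ | g * gᵀ = 1 ∧ g.det = 1} ⊆
      Set.univ.pi fun _ : Fin 3 => Set.univ.pi fun _ : Fin 3 => Set.Icc (-1 : ℝ) 1 := by
    rintro g ⟨hg, -⟩ i - j -
    have h := congrFun (congrFun hg i) i
    rw [Matrix.mul_apply, Matrix.one_apply_eq] at h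
    simp only [Matrix.transpose_apply] at h
    have hle : g i j * g i j ≤ 1 := by
      have h2 := Finset.single_le_sum (f := fun k => g i k * g i k)
        (fun k _ => mul_self_nonneg _) (Finset.mem_univ j)
      rw [h] at h2
      exact h2
    constructor <;> nlinarith
  have hcl : IsClosed {g : Matrix (Fin 3) (Fin 3) ℝ | g * gᵀ = 1 ∧ g.det = 1} := by
    refine IsClosed.inter ?_ ?_
    · exact isClosed_eq (continuous_id.matrix_mul continuous_id.matrix_transpose)
        continuous_const
    · exact isClosed_eq continuous_id.matrix_det continuous_const
  have hcpt : IsCompact {g : Matrix (Fin 3) (Fin 3) ℝ | g * gᵀ = 1 ∧ g.det = 1} :=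
    ((isCompact_univ_pi fun _ => isCompact_univ_pi fun _ => isCompact_Icc).of_isClosed_subset
      hcl hsub)
  exact isCompact_iff_compactSpace.mp hcpt

/-- The profile function `f(r) = √(1 - √λ/√(λ+r²))`. -/
noncomputable def fr (lam r : ℝ) : ℝ :=
  Real.sqrt (1 - Real.sqrt lam / Real.sqrt (lam + r ^ 2))

lemma sqrt_add_pos {lam : ℝ} (hlam : 0 < lam) (r : ℝ) : 0 < Real.sqrt (lam + r ^ 2) :=
  Real.sqrt_pos.2 (by positivity)

lemma ratio_le_one {lam : ℝ} (hlam : 0 < lam) (r : ℝ) :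
    Real.sqrt lam / Real.sqrt (lam + r ^ 2) ≤ 1 :=
  (div_le_one (sqrt_add_pos hlam r)).2 (Real.sqrt_le_sqrt (by nlinarith))

lemma fr_nonneg (lam r : ℝ) : 0 ≤ fr lam r := Real.sqrt_nonneg _

lemma fr_sq {lam : ℝ} (hlam : 0 < lam) (r : ℝ) :
    fr lam r ^ 2 = 1 - Real.sqrt lam / Real.sqrt (lam + r ^ 2) :=
  Real.sq_sqrt (by linarith [ratio_le_one hlam r])

lemma fr_key {lam : ℝ} (hlam : 0 < lam) (r : ℝ) :
    (1 - fr lam r ^ 2) * Real.sqrt (lam + r ^ 2) = Real.sqrt lam := by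
  rw [fr_sq hlam r]
  have h := (sqrt_add_pos hlam r).ne'
  field_simp
  ring

lemma fr_zero {lam : ℝ} (hlam : 0 < lam) : fr lam 0 = 0 := by
  unfold fr
  rw [show lam + (0:ℝ) ^ 2 = lam by ring,
    div_self (Real.sqrt_pos.2 hlam).ne', sub_self, Real.sqrt_zero]

lemma fr_pos {lam : ℝ} (hlam : 0 < lam) {r : ℝ} (hr : 0 < r) : 0 < fr lam r := by
  apply Real.sqrt_pos.2
  rw [sub_pos, div_lt_one (sqrt_add_pos hlam r)]
  exact Real.sqrt_lt_sqrt hlam.le (by nlinarith)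

lemma mem_NSet_fr {lam C D : ℝ} (hlam : 0 < lam)
    (hcrit : Real.sqrt C + Real.sqrt D = Real.sqrt lam) {r : ℝ} (hr : 0 ≤ r) (g : SO3) :
    (fr lam r • _root_.col g 0, r • _root_.col g 1) ∈ NSet lam C D := by
  constructor
  · rw [real_inner_smul_left, real_inner_smul_right, inner_col]
    norm_num
  · have h0 : ‖fr lam r • _root_.col g 0‖ = fr lam r := by
      rw [norm_smul, norm_col, Real.norm_eq_abs, abs_of_nonneg (fr_nonneg lam r), mul_one]
    have h1 : ‖r • _root_.col g 1‖ = r := by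
      rw [norm_smul, norm_col, Real.norm_eq_abs, abs_of_nonneg hr, mul_one]
    rw [h0, h1, hcrit]
    exact fr_key hlam r

/-- In the critical case `√C + √D = √λ`, with `f(r) = √(1 - (√C+√D)/√(λ+r²))`, the map
`[(r, (g₁,g₂,g₃))] ↦ (f(r)·g₁, r·g₂)` is a well-defined homeomorphism from the cone over
SO(3) onto `N`; in particular `N` is homeomorphic to the cone over SO(3), with apex
`(0,0) ∈ N`. -/
theorem NSet_homeo_cone_critical (lam C D : ℝ) (hlam : 0 < lam) (hC : 0 < C) (hD : 0 < D)
    (hcrit : Real.sqrt C + Real.sqrt D = Real.sqrt lam) :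
    ((0, 0) : EuclideanSpace ℝ (Fin 3) × EuclideanSpace ℝ (Fin 3)) ∈ NSet lam C D ∧
    ∃ h : ConeSO3 ≃ₜ NSet lam C D,
      ∀ (r : NNReal) (g : SO3),
        (h (Quotient.mk coneSetoid (r, g)) :
            EuclideanSpace ℝ (Fin 3) × EuclideanSpace ℝ (Fin 3)) =
          (Real.sqrt (1 - (Real.sqrt C + Real.sqrt D) / Real.sqrt (lam + (r : ℝ) ^ 2)) •
              col g 0,
            (r : ℝ) • col g 1) := by
  
  have hslam : (0:ℝ) < Real.sqrt lam := Real.sqrt_pos.2 hlam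
  constructor
  · refine ⟨by simp, ?_⟩
    show (1 - ‖(0 : EuclideanSpace ℝ (Fin 3))‖ ^ 2) * Real.sqrt (lam + ‖(0 : EuclideanSpace ℝ (Fin 3))‖ ^ 2) = _
    rw [norm_zero, hcrit]
    norm_num
  -- the map on `ℝ≥0 × SO3`
  set Fm : NNReal × SO3 → (EuclideanSpace ℝ (Fin 3) × EuclideanSpace ℝ (Fin 3)) :=
    fun a => (fr lam (a.1 : ℝ) • _root_.col a.2 0, (a.1 : ℝ) • _root_.col a.2 1) with hFm
  have hFmem : ∀ a, Fm a ∈ NSet lam C D := fun a => mem_NSet_fr hlam hcrit a.1.coe_nonneg a.2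
  set Fs : NNReal × SO3 → NSet lam C D := fun a => ⟨Fm a, hFmem a⟩ with hFs
  have hFm_zero : ∀ (r : NNReal) (g : SO3), r = 0 → Fm (r, g) = (0, 0) := by
    rintro r g rfl
    simp only [hFm, NNReal.coe_zero, fr_zero hlam, zero_smul]
  have hresp : ∀ a b : NNReal × SO3, coneSetoid.r a b → Fs a = Fs b := by
    rintro a b (rfl | ⟨h1, h2⟩)
    · rfl
    · refine Subtype.ext ?_
      show Fm a = Fm b
      rw [show Fm a = Fm (a.1, a.2) from rfl, hFm_zero a.1 a.2 h1,
        show Fm b = Fm (b.1, b.2) from rfl, hFm_zero b.1 b.2 h2]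
  set F : ConeSO3 → NSet lam C D := Quotient.lift Fs hresp with hF
  -- continuity
  have hcol : ∀ i : Fin 3, Continuous fun a : NNReal × SO3 => _root_.col a.2 i := by
    intro i
    exact (PiLp.continuous_toLp 2 _).comp <| continuous_pi fun j =>
      (continuous_apply i).comp ((continuous_apply j).comp
        ((continuous_subtype_val (p := fun g : Matrix (Fin 3) (Fin 3) ℝ => g * gᵀ = 1 ∧ g.det = 1)).comp continuous_snd))
  have hfrc : Continuous fun a : NNReal × SO3 => fr lam (a.1 : ℝ) := by
    apply Real.continuous_sqrt.comp
    apply Continuous.sub continuous_const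
    apply Continuous.div continuous_const
    · exact Real.continuous_sqrt.comp (continuous_const.add
        ((NNReal.continuous_coe.comp continuous_fst).pow 2))
    · exact fun a => (sqrt_add_pos hlam _).ne'
  have hFscont : Continuous Fs := by
    apply Continuous.subtype_mk
    exact (hfrc.smul (hcol 0)).prodMk
      ((NNReal.continuous_coe.comp continuous_fst).smul (hcol 1))
  have hFcont : Continuous F := hFscont.quotient_lift hresp
  -- injectivity
  have hcol_eq : ∀ ga gb : SO3, _root_.col ga 0 = _root_.col gb 0 →
      _root_.col ga 1 = _root_.col gb 1 → ga = gb := by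
    intro ga gb h0 h1
    have h2 : _root_.col ga 2 = _root_.col gb 2 := by
      have := col_two ga
      rw [h0, h1, ← col_two gb] at this
      exact congrArg (WithLp.toLp 2) this
    apply Subtype.ext
    ext i j
    fin_cases j
    · exact congrArg (fun v : EuclideanSpace ℝ (Fin 3) => v i) h0
    · exact congrArg (fun v : EuclideanSpace ℝ (Fin 3) => v i) h1
    · exact congrArg (fun v : EuclideanSpace ℝ (Fin 3) => v i) h2
  have hinj : Function.Injective F := by
    rintro ⟨⟨ra, ga⟩⟩ ⟨⟨rb, gb⟩⟩ hab
    have h' : Fm (ra, ga) = Fm (rb, gb) := congrArg Subtype.val hab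
    have h1 := congrArg Prod.fst h'
    have h2 := congrArg Prod.snd h'
    simp only [hFm] at h1 h2
    have hr : (ra : ℝ) = rb := by
      have hn := congrArg norm h2
      rwa [norm_smul, norm_smul, _root_.norm_col, _root_.norm_col, mul_one, mul_one, Real.norm_eq_abs,
        Real.norm_eq_abs, abs_of_nonneg ra.coe_nonneg, abs_of_nonneg rb.coe_nonneg] at hn
    by_cases h0 : ra = 0
    · refine Quotient.sound (Or.inr ⟨h0, ?_⟩)
      have : (rb : ℝ) = 0 := by rw [← hr, h0, NNReal.coe_zero]
      exact NNReal.coe_injective (by simpa using this)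
    · have hrpos : (0:ℝ) < ra := lt_of_le_of_ne ra.2 (fun hc => h0 (NNReal.coe_injective hc.symm))
      rw [← hr] at h2
      have hc1 : _root_.col ga 1 = _root_.col gb 1 :=
        smul_right_injective (EuclideanSpace ℝ (Fin 3)) hrpos.ne' h2
      have hfrpos : (0:ℝ) < fr lam (ra:ℝ) := fr_pos hlam hrpos
      rw [← hr] at h1
      have hc0 : _root_.col ga 0 = _root_.col gb 0 :=
        smul_right_injective (EuclideanSpace ℝ (Fin 3)) hfrpos.ne' h1
      exact Quotient.sound (Or.inl (by
        rw [hcol_eq ga gb hc0 hc1, NNReal.coe_injective hr]))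
  -- surjectivity
  have hsurj : Function.Surjective F := by
    rintro ⟨⟨v, w⟩, hvw, heq⟩
    rw [hcrit] at heq
    by_cases hw : w = 0
    · subst hw
      have hn0 : ‖(0 : EuclideanSpace ℝ (Fin 3))‖ = 0 := norm_zero
      rw [hn0] at heq
      have hv2 : ‖v‖ ^ 2 = 0 := by
        have h1 : (1 - ‖v‖ ^ 2) * Real.sqrt (lam + 0 ^ 2) = 1 * Real.sqrt (lam + 0 ^ 2) := by
          rw [heq, one_mul, show lam + (0:ℝ)^2 = lam by ring]
        have := mul_right_cancel₀ (sqrt_add_pos hlam 0).ne' h1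
        linarith
      have hv : v = 0 := by
        rw [pow_eq_zero_iff (two_ne_zero)] at hv2
        exact norm_eq_zero.mp hv2
      refine ⟨Quotient.mk coneSetoid (0, SO3.one), Subtype.ext ?_⟩
      show Fm (0, SO3.one) = (v, (0 : EuclideanSpace ℝ (Fin 3)))
      rw [hFm_zero 0 SO3.one rfl, hv]
    · have hrpos : (0:ℝ) < ‖w‖ := norm_pos_iff.2 hw
      have hveq : ‖v‖ = fr lam ‖w‖ := by
        have h2 : ‖v‖ ^ 2 = fr lam ‖w‖ ^ 2 := by
          rw [fr_sq hlam]
          have h3 : 1 - ‖v‖ ^ 2 = Real.sqrt lam / Real.sqrt (lam + ‖w‖ ^ 2) :=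
            (eq_div_iff (sqrt_add_pos hlam ‖w‖).ne').2 heq
          linarith
        calc ‖v‖ = Real.sqrt (‖v‖ ^ 2) := (Real.sqrt_sq (norm_nonneg v)).symm
        _ = Real.sqrt (fr lam ‖w‖ ^ 2) := by rw [h2]
        _ = fr lam ‖w‖ := Real.sqrt_sq (fr_nonneg lam ‖w‖)
      have hfrpos : (0:ℝ) < fr lam ‖w‖ := fr_pos hlam hrpos
      have hnv : (0:ℝ) < ‖v‖ := by rw [hveq]; exact hfrpos
      set a : EuclideanSpace ℝ (Fin 3) := ‖v‖⁻¹ • v with hadef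
      set b : EuclideanSpace ℝ (Fin 3) := ‖w‖⁻¹ • w with hbdef
      have haa : (a : Fin 3 → ℝ) ⬝ᵥ a = 1 := by
        rw [← inner_eq_dot, hadef, real_inner_smul_left, real_inner_smul_right,
          real_inner_self_eq_norm_sq]
        field_simp
      have hbb : (b : Fin 3 → ℝ) ⬝ᵥ b = 1 := by
        rw [← inner_eq_dot, hbdef, real_inner_smul_left, real_inner_smul_right,
          real_inner_self_eq_norm_sq]
        field_simp
      have hab : (a : Fin 3 → ℝ) ⬝ᵥ b = 0 := by
        rw [← inner_eq_dot, hadef, hbdef, real_inner_smul_left, real_inner_smul_right, hvw]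
        ring
      set g : SO3 := frameSO3 a b haa hbb hab with hgdef
      refine ⟨Quotient.mk coneSetoid (⟨‖w‖, hrpos.le⟩, g), Subtype.ext ?_⟩
      show Fm (⟨‖w‖, hrpos.le⟩, g) = (v, w)
      have hca : _root_.col g 0 = a := frameSO3_col0 a b haa hbb hab
      have hcb : _root_.col g 1 = b := frameSO3_col1 a b haa hbb hab
      simp only [hFm, hca, hcb]
      refine Prod.ext ?_ ?_
      · show fr lam ‖w‖ • (‖v‖⁻¹ • v) = v
        rw [smul_smul, ← hveq, mul_inv_cancel₀ hnv.ne', one_smul]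
      · show (‖w‖ : ℝ) • (‖w‖⁻¹ • w) = w
        rw [smul_smul, mul_inv_cancel₀ hrpos.ne', one_smul]
  -- properness
  have hqc : Continuous (Quotient.mk coneSetoid) := continuous_quotient_mk'
  have hcompact : ∀ K : Set (NSet lam C D), IsCompact K → IsCompact (F ⁻¹' K) := by
    intro K hK
    obtain ⟨R, hR⟩ : ∃ R : ℝ, ∀ p ∈ K, ‖((p : NSet lam C D) :
        EuclideanSpace ℝ (Fin 3) × EuclideanSpace ℝ (Fin 3)).2‖ ≤ R := by
      obtain ⟨R, hR⟩ := (hK.image continuous_subtype_val).isBounded.subset_closedBall 0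
      refine ⟨R, fun p hp => ?_⟩
      have h1 := hR (Set.mem_image_of_mem _ hp)
      rw [Metric.mem_closedBall, dist_zero_right] at h1
      exact (norm_snd_le _).trans h1
    have hpre : IsCompact (Fs ⁻¹' K) := by
      have hcl : IsClosed (Fs ⁻¹' K) := hK.isClosed.preimage hFscont
      have hsubK : Fs ⁻¹' K ⊆ (Set.Icc 0 (Real.toNNReal R)) ×ˢ (Set.univ : Set SO3) := by
        rintro ⟨r, g⟩ hr
        have h1 := hR _ hr
        have h2 : ‖(Fm (r, g)).2‖ = (r : ℝ) := by
          rw [hFm]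
          rw [norm_smul, _root_.norm_col, mul_one, Real.norm_eq_abs, abs_of_nonneg r.coe_nonneg]
        refine ⟨⟨by positivity, ?_⟩, trivial⟩
        rw [← NNReal.coe_le_coe]
        calc (r : ℝ) = ‖(Fm (r, g)).2‖ := h2.symm
        _ ≤ R := h1
        _ ≤ _ := Real.le_coe_toNNReal R
      exact (isCompact_Icc.prod isCompact_univ).of_isClosed_subset hcl hsubK
    have himg : F ⁻¹' K = Quotient.mk coneSetoid '' (Fs ⁻¹' K) := by
      ext x
      constructor
      · intro hx
        obtain ⟨a, rfl⟩ := Quotient.exists_rep x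
        exact ⟨a, hx, rfl⟩
      · rintro ⟨a, ha, rfl⟩
        exact ha
    rw [himg]
    exact hpre.image hqc
  have hproper : IsProperMap F := isProperMap_iff_isCompact_preimage.2 ⟨hFcont, hcompact⟩
  have hclosed : IsClosedMap F := hproper.isClosedMap
  set e : ConeSO3 ≃ NSet lam C D := Equiv.ofBijective F ⟨hinj, hsurj⟩ with he
  have hinv : Continuous e.symm := by
    rw [continuous_iff_isClosed]
    intro s hs
    have h1 : e.symm ⁻¹' s = F '' s := by
      rw [← Equiv.image_eq_preimage_symm]
      rfl
    rw [h1]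
    exact hclosed s hs
  refine ⟨⟨e, hFcont, hinv⟩, ?_⟩
  intro r g
  show Fm (r, g) = _
  rw [hcrit]
  rfl
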